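/- arXiv:1504.04424 — 3 statements merged into one kernel-verified Lean document; each statement's English description precedes it below -/
import Mathlib

section
/- Let V be a nondoubled word (i.e., some letter occurs exactly once in V), let Σ be a finite alphabet with q ≥ 2 letters, and let W_n ∈ Σ^n be chosen uniformly at random. Then for all n > |V|, E(δ(V,W_n)) ≥ q^{-||V||} · C(n − |V| + 1, 2)/C(n+1, 2); in particular, liminf_{n→∞} E(δ(V,W_n)) ≥ q^{-||V||} > 0. -/
open Filter Asymptotics

/-- The substring `W[i,j]` of `W`: the `j - i` consecutive letters of `W`
beginning with the `(i+1)`-th. -/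
def subword {β : Type*} (W : List β) (i j : ℕ) : List β :=
  (W.drop i).take (j - i)

/-- `W` is an instance of `V` provided `W = φ(V)` for some nonerasing
homomorphism `φ`, i.e. a map on letters (no letter mapping to the empty word)
extended by concatenation. -/
def IsInstance {α β : Type*} (V : List α) (W : List β) : Prop :=
  ∃ φ : α → List β, (∀ a, φ a ≠ []) ∧ W = (V.map φ).flatten

/-- A word is doubled provided every letter occurring in it occurs at least twice. -/
def Doubled {α : Type*} [DecidableEq α] (V : List α) : Prop :=
  ∀ a ∈ V, 2 ≤ V.count a

open Classical in
/-- `density V W` is the proportion of the `C(|W|+1, 2)` substrings of `W`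
(indexed by pairs `(i,j)` with `0 ≤ i < j ≤ |W|`) that are instances of `V`. -/
noncomputable def density {α β : Type*} (V : List α) (W : List β) : ℝ :=
  (((Finset.range (W.length + 1) ×ˢ Finset.range (W.length + 1)).filter
      (fun p => p.1 < p.2 ∧ IsInstance V (subword W p.1 p.2))).card : ℝ) /
    (Nat.choose (W.length + 1) 2)

/-- The expected density of `V` in a word of length `n` chosen uniformly at
random over the alphabet `σ` (words of length `n` being encoded as `Fin n → σ`). -/
noncomputable def expDensity {α : Type*} (V : List α) (σ : Type*) [Fintype σ] (n : ℕ) : ℝ :=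
  (∑ w : Fin n → σ, density V (List.ofFn w)) / (Fintype.card σ : ℝ) ^ n

/-- `homCount V W` counts the encounters of `V` in `W`: triples `(a, b, φ)`
where `φ` is a nonerasing homomorphism from the letters of `V` with
`W[a,b] = φ(V)`. -/
noncomputable def homCount {α σ : Type*} (V : List α) (W : List σ) : ℕ :=
  Set.ncard {t : ℕ × ℕ × ({a : α // a ∈ V} → List σ) |
    t.1 < t.2.1 ∧ t.2.1 ≤ W.length ∧ (∀ a, t.2.2 a ≠ []) ∧
    subword W t.1 t.2.1 = (V.attach.map t.2.2).flatten}

/-- Expected number of encounters of `V` in a uniformly random word of length `n`. -/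
noncomputable def expHom {α : Type*} (V : List α) (σ : Type*) [Fintype σ] (n : ℕ) : ℝ :=
  (∑ w : Fin n → σ, (homCount V (List.ofFn w) : ℝ)) / (Fintype.card σ : ℝ) ^ n

/-- `instProb V σ m` is the proportion of words in `σ^m` that are instances of `V`. -/
noncomputable def instProb {α : Type*} (V : List α) (σ : Type*) [Fintype σ] (m : ℕ) : ℝ :=
  (Nat.card {w : Fin m → σ // IsInstance V (List.ofFn w)} : ℝ) / (Fintype.card σ : ℝ) ^ m

/-- The variance of the density of `V` in a uniformly random word of length `n`. -/
noncomputable def varDensity {α : Type*} (V : List α) (σ : Type*) [Fintype σ] (n : ℕ) : ℝ :=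
  (∑ w : Fin n → σ, (density V (List.ofFn w) - expDensity V σ n) ^ 2) /
    (Fintype.card σ : ℝ) ^ n

/-! Fix a letter `a` occurring exactly once in `V = P a S`. Sending every other letter of `V`
to a single letter and `a` to an arbitrary word of length `m - |V| + 1` produces `q^(m - ‖V‖)`
distinct `V`-instances of length `m`, so a uniform word of length `m ≥ |V|` is a `V`-instance with
probability at least `q^(-‖V‖)`. By linearity of expectation, `E(δ(V,W_n))` is the average over
the `C(n+1,2)` windows `W[i,j]` of this probability for length `j - i`, and `C(n-|V|+1,2)` of
the windows are longer than `|V|`. -/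

open Finset Topology

section

variable {α σ : Type*}

lemma subword_append_append (x u y : List σ) :
    subword (x ++ u ++ y) x.length (x.length + u.length) = u := by
  simp [subword]

lemma card_filter_subword [Fintype σ] (p : List σ → Prop) [DecidablePred p] (i m r : ℕ) :
    #{w : Fin (i + m + r) → σ | p (subword (List.ofFn w) i (i + m))} =
      Fintype.card σ ^ i * #{u : Fin m → σ | p (List.ofFn u)} * Fintype.card σ ^ r := by
  let e := ((Fin.appendEquiv (α := σ) i m).prodCongr (Equiv.refl _)).trans
    (Fin.appendEquiv (i + m) r)
  have hsub : ∀ t, subword (List.ofFn (e t)) i (i + m) = List.ofFn t.1.2 := fun t => by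
    show subword (List.ofFn (Fin.append (Fin.append t.1.1 t.1.2) t.2)) i (i + m) = _
    simpa using subword_append_append (List.ofFn t.1.1) (List.ofFn t.1.2) (List.ofFn t.2)
  rw [Finset.card_equiv e.symm (t := {t | p (List.ofFn t.1.2)}) (fun w => by
    simp only [mem_filter_univ, ← hsub, e.apply_symm_apply])]
  rw [show ({t | p (List.ofFn t.1.2)} : Finset (((Fin i → σ) × (Fin m → σ)) × (Fin r → σ))) =
      (univ ×ˢ ({u | p (List.ofFn u)} : Finset (Fin m → σ))) ×ˢ univ by ext; simp]
  simp [card_product]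

lemma card_filter_subword_div [Fintype σ] [Nonempty σ] (p : List σ → Prop) [DecidablePred p]
    {i j n : ℕ} (hij : i ≤ j) (hjn : j ≤ n) :
    (#{w : Fin n → σ | p (subword (List.ofFn w) i j)} : ℝ) / Fintype.card σ ^ n =
      #{u : Fin (j - i) → σ | p (List.ofFn u)} / Fintype.card σ ^ (j - i) := by
  obtain ⟨m, rfl⟩ := Nat.exists_eq_add_of_le hij
  obtain ⟨r, rfl⟩ := Nat.exists_eq_add_of_le hjn
  rw [card_filter_subword, Nat.add_sub_cancel_left]
  push_cast
  field_simp
  ring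

open Classical in
lemma instProb_eq_card_filter_div [Fintype σ] (V : List α) (m : ℕ) :
    instProb V σ m = #{u : Fin m → σ | IsInstance V (List.ofFn u)} / Fintype.card σ ^ m := by
  rw [instProb, Nat.card_eq_fintype_card, Fintype.card_subtype]

lemma instProb_nonneg [Fintype σ] (V : List α) (m : ℕ) : 0 ≤ instProb V σ m := by
  unfold instProb
  positivity

open Classical in
theorem expDensity_eq_sum_instProb [Fintype σ] [Nonempty σ] (V : List α) (n : ℕ) :
    expDensity V σ n = (∑ p ∈ range (n + 1) ×ˢ range (n + 1) with p.1 < p.2,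
      instProb V σ (p.2 - p.1)) / (n + 1).choose 2 := by
  unfold expDensity density
  simp only [List.length_ofFn]
  rw [← sum_div, div_right_comm]
  congr 1
  have hswap : ∑ w : Fin n → σ, #{p ∈ range (n + 1) ×ˢ range (n + 1) |
        p.1 < p.2 ∧ IsInstance V (subword (List.ofFn w) p.1 p.2)} =
      ∑ p ∈ range (n + 1) ×ˢ range (n + 1) with p.1 < p.2,
        #{w : Fin n → σ | IsInstance V (subword (List.ofFn w) p.1 p.2)} := by
    simp_rw [card_filter, sum_filter, ite_and]
    rw [sum_comm]
    refine sum_congr rfl fun p _ => ?_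
    split_ifs <;> simp
  rw_mod_cast [hswap]
  push_cast
  rw [sum_div]
  refine sum_congr rfl fun p hp => ?_
  simp only [mem_filter, mem_product, mem_range] at hp
  rw [card_filter_subword_div (IsInstance V) hp.2.le (by omega), instProb_eq_card_filter_div]

open Classical in
lemma density_le_one {β : Type*} (V : List α) (W : List β) : density V W ≤ 1 := by
  have hpairs := card_product_filter_lt (s := range (W.length + 1))
  rw [card_range] at hpairs
  refine div_le_one_of_le₀ (Nat.cast_le.mpr ?_) (by positivity)
  rw [← hpairs]
  exact card_le_card (monotone_filter_right _ fun _ _ h => h.1)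

lemma expDensity_le_one [Fintype σ] [Nonempty σ] (V : List α) (n : ℕ) :
    expDensity V σ n ≤ 1 := by
  refine div_le_one_of_le₀ ?_ (by positivity)
  calc ∑ w : Fin n → σ, density V (List.ofFn w) ≤ ∑ _w : Fin n → σ, 1 :=
        sum_le_sum fun w _ => density_le_one V _
    _ = (Fintype.card σ : ℝ) ^ n := by simp

lemma flatten_map_update_singleton [DecidableEq α] (g : α → σ) (v : List σ) {a : α}
    {P S : List α} (haP : a ∉ P) (haS : a ∉ S) :
    ((P ++ a :: S).map (Function.update (fun b => [g b]) a v)).flatten =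
      P.map g ++ v ++ S.map g := by
  have hsingle : ∀ l : List α, a ∉ l →
      (l.map (Function.update (fun b => [g b]) a v)).flatten = l.map g := fun l hl => by
    induction l with
    | nil => rfl
    | cons b l ih =>
      simp only [List.mem_cons, not_or] at hl
      simp [Function.update_of_ne (Ne.symm hl.1), ih hl.2]
  simp [hsingle P haP, hsingle S haS]

lemma card_le_natCard_subtype_ofFn [Finite σ] {D : Type*} [Fintype D] {p : List σ → Prop}
    {m : ℕ} (f : D → List σ) (hf : Function.Injective f) (hlen : ∀ t, (f t).length = m)
    (hp : ∀ t, p (f t)) :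
    Fintype.card D ≤ Nat.card {u : Fin m → σ // p (List.ofFn u)} := by
  have hofFn : ∀ t, List.ofFn (fun k : Fin m => (f t)[k.1]'(by rw [hlen]; exact k.2)) = f t :=
    fun t => List.ext_getElem (by simp [hlen]) (by simp)
  rw [← Nat.card_eq_fintype_card]
  refine Nat.card_le_card_of_injective (fun t => ⟨_, (hofFn t).symm ▸ hp t⟩) fun t t' h => hf ?_
  rw [← hofFn t, ← hofFn t']
  exact congrArg (fun u => List.ofFn u.1) h

lemma pow_le_natCard_isInstance [DecidableEq α] [Fintype σ] [Nonempty σ] {V : List α} {a : α}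
    (ha : V.count a = 1) {m : ℕ} (hm : V.length ≤ m) :
    Fintype.card σ ^ (m + V.toFinset.card - V.length) ≤
      Nat.card {u : Fin m → σ // IsInstance V (List.ofFn u)} := by
  obtain ⟨P, S, rfl⟩ := List.mem_iff_append.mp (List.count_pos_iff.mp (ha ▸ one_pos))
  rw [List.count_append, List.count_cons_self] at ha
  have haP : a ∉ P := List.count_eq_zero.mp (by omega)
  have haS : a ∉ S := List.count_eq_zero.mp (by omega)
  set E := (P ++ a :: S).toFinset.erase a
  let extend : (E → σ) → α → σ := fun g b => if h : b ∈ E then g ⟨b, h⟩ else Classical.arbitrary σ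
  let φ : (E → σ) × (Fin (m - (P ++ a :: S).length + 1) → σ) → α → List σ := fun t =>
    Function.update (fun b => [extend t.1 b]) a (List.ofFn t.2)
  have hφ : ∀ t, ((P ++ a :: S).map (φ t)).flatten =
      P.map (extend t.1) ++ List.ofFn t.2 ++ S.map (extend t.1) := fun t =>
    flatten_map_update_singleton _ _ haP haS
  have hinj : Function.Injective fun t => ((P ++ a :: S).map (φ t)).flatten := by
    intro t t' h
    simp only [hφ] at h
    obtain ⟨h', hS⟩ := List.append_inj h (by simp)
    obtain ⟨hP, hv⟩ := List.append_inj h' (by simp)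
    refine Prod.ext (funext fun ⟨b, hb⟩ => ?_) (List.ofFn_injective hv)
    have hbPS : b ∈ P ∨ b ∈ S := by simpa [(mem_erase.mp hb).1] using (mem_erase.mp hb).2
    have := hbPS.elim (List.map_inj_left.mp hP b) (List.map_inj_left.mp hS b)
    simpa [extend, hb] using this
  calc Fintype.card σ ^ (m + (P ++ a :: S).toFinset.card - (P ++ a :: S).length)
      = Fintype.card ((E → σ) × (Fin (m - (P ++ a :: S).length + 1) → σ)) := by
        have : 1 ≤ (P ++ a :: S).toFinset.card := card_pos.mpr ⟨a, by simp⟩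
        simp only [Fintype.card_prod, Fintype.card_fun, Fintype.card_coe, Fintype.card_fin,
          E, card_erase_of_mem (show a ∈ (P ++ a :: S).toFinset by simp), ← pow_add]
        congr 1
        omega
    _ ≤ _ := card_le_natCard_subtype_ofFn _ hinj (fun t => by rw [hφ]; simp at hm ⊢; omega)
        fun t => ⟨φ t, fun b => by by_cases hb : b = a <;> simp [φ, hb], rfl⟩

lemma inv_pow_le_instProb [DecidableEq α] [Fintype σ] [Nonempty σ] {V : List α} {a : α}
    (ha : V.count a = 1) {m : ℕ} (hm : V.length ≤ m) :
    (Fintype.card σ : ℝ)⁻¹ ^ (V.length - V.toFinset.card) ≤ instProb V σ m := by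
  have hd : V.toFinset.card ≤ V.length := V.toFinset_card_le
  rw [instProb, le_div_iff₀ (by positivity), inv_pow, inv_mul_eq_div,
    div_le_iff₀ (by positivity)]
  calc (Fintype.card σ : ℝ) ^ m = (Fintype.card σ : ℝ) ^ (m + V.toFinset.card - V.length) *
        (Fintype.card σ : ℝ) ^ (V.length - V.toFinset.card) := by
        rw [← pow_add]
        congr 1
        omega
    _ ≤ _ := by
        gcongr
        exact_mod_cast pow_le_natCard_isInstance (σ := σ) ha hm

lemma tendsto_choose_two_sub_div_choose_two (L : ℕ) :
    Tendsto (fun n : ℕ => ((n - L + 1).choose 2 : ℝ) / (n + 1).choose 2) atTop (𝓝 1) := by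
  rw [← tendsto_add_atTop_iff_nat L]
  have h := tendsto_natCast_div_add_atTop (L : ℝ)
  have hprod := (h.comp (tendsto_add_atTop_nat 1)).mul h
  rw [mul_one] at hprod
  refine hprod.congr' ((eventually_ge_atTop 1).mono fun N hN => ?_)
  simp only [Function.comp_apply, Nat.add_sub_cancel, Nat.cast_choose_two]
  push_cast
  simp only [add_sub_cancel_right]
  rw [div_mul_div_comm, div_eq_div_iff (by positivity) (by positivity)]
  ring

lemma inv_pow_mul_choose_div_le_expDensity [DecidableEq α] [Fintype σ] [Nonempty σ]
    {V : List α} {a : α} (ha : V.count a = 1) (n : ℕ) :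
    (Fintype.card σ : ℝ)⁻¹ ^ (V.length - V.toFinset.card) * (n - V.length + 1).choose 2 /
      (n + 1).choose 2 ≤ expDensity V σ n := by
  rw [expDensity_eq_sum_instProb]
  gcongr
  set T := ((range (n - V.length + 1)) ×ˢ (range (n - V.length + 1))).filter
    fun p : ℕ × ℕ => p.1 < p.2
  have hinj : Set.InjOn (fun p : ℕ × ℕ => (p.1, p.2 + V.length)) T := fun p _ p' _ h => by
    simp only [Prod.mk.injEq] at h
    exact Prod.ext h.1 (by omega)
  calc (Fintype.card σ : ℝ)⁻¹ ^ (V.length - V.toFinset.card) * (n - V.length + 1).choose 2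
      = ∑ _p ∈ T, (Fintype.card σ : ℝ)⁻¹ ^ (V.length - V.toFinset.card) := by
        rw [sum_const, card_product_filter_lt, card_range, nsmul_eq_mul, mul_comm]
    _ ≤ ∑ p ∈ T, instProb V σ (p.2 + V.length - p.1) :=
        sum_le_sum fun p hp => inv_pow_le_instProb ha (by simp [T] at hp; omega)
    _ = ∑ p ∈ T.image fun p => (p.1, p.2 + V.length), instProb V σ (p.2 - p.1) :=
        (sum_image (f := fun p : ℕ × ℕ => instProb V σ (p.2 - p.1)) hinj).symm
    _ ≤ _ := by
        refine sum_le_sum_of_subset_of_nonneg ?_ fun p _ _ => instProb_nonneg V _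
        intro p hp
        simp only [T, mem_image, mem_filter, mem_product, mem_range] at hp ⊢
        obtain ⟨p, hp, rfl⟩ := hp
        omega

lemma inv_pow_le_liminf_expDensity [DecidableEq α] [Fintype σ] [Nonempty σ]
    {V : List α} {a : α} (ha : V.count a = 1) :
    (Fintype.card σ : ℝ)⁻¹ ^ (V.length - V.toFinset.card) ≤
      liminf (fun n => expDensity V σ n) atTop := by
  set c := (Fintype.card σ : ℝ)⁻¹ ^ (V.length - V.toFinset.card)
  have hlim : Tendsto (fun n : ℕ => c * (n - V.length + 1).choose 2 / (n + 1).choose 2) atTop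
      (𝓝 c) := by
    simpa [mul_div_assoc] using (tendsto_choose_two_sub_div_choose_two V.length).const_mul c
  calc c = liminf (fun n : ℕ => c * (n - V.length + 1).choose 2 / (n + 1).choose 2) atTop :=
        hlim.liminf_eq.symm
    _ ≤ _ := liminf_le_liminf
        (Eventually.of_forall fun n => inv_pow_mul_choose_div_le_expDensity ha n)
        hlim.isBoundedUnder_ge (isCoboundedUnder_ge_of_le atTop fun n => expDensity_le_one V n)

end

/-- For nondoubled `V` (some letter occurs exactly once) and `q ≥ 2`:
for all `n > |V|`, `E(δ(V,W_n)) ≥ q^{-‖V‖} C(n-|V|+1, 2)/C(n+1, 2)`, where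
`‖V‖ = |V| - #distinct letters`; in particular
`liminf E(δ(V,W_n)) ≥ q^{-‖V‖} > 0`. -/
theorem stmt2 {α σ : Type*} [DecidableEq α] [Fintype σ] (V : List α)
    (hV : ∃ a ∈ V, V.count a = 1) (hq : 2 ≤ Fintype.card σ) :
    (∀ n : ℕ, V.length < n →
      ((Fintype.card σ : ℝ))⁻¹ ^ (V.length - V.toFinset.card) *
          (Nat.choose (n - V.length + 1) 2) / (Nat.choose (n + 1) 2) ≤
        expDensity V σ n) ∧
    ((Fintype.card σ : ℝ))⁻¹ ^ (V.length - V.toFinset.card) ≤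
      liminf (fun n => expDensity V σ n) atTop ∧
    0 < ((Fintype.card σ : ℝ))⁻¹ ^ (V.length - V.toFinset.card) := by
  obtain ⟨a, -, ha⟩ := hV
  have : Nonempty σ := Fintype.card_pos_iff.mp (by omega)
  exact ⟨fun n _ => inv_pow_mul_choose_div_le_expDensity ha n,
    inv_pow_le_liminf_expDensity ha, by positivity⟩
end

section
/- Let V be a word with k distinct letters, minimal letter-multiplicity r, and d the gcd of the letter multiplicities of V, and let Σ be a finite alphabet with q ≥ 2 letters. Then there exist a constant c > 0 and an integer N such that for all n > N, the number of V-instances in Σ^{dn} is at least c · q^{dn/r}. -/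
open Filter Asymptotics

/-!
Fix a letter `a₀` of multiplicity `r` and write `c a` for the multiplicity of `a`. By Bézout,
`d = ∑ c a * x a`; choosing `ℓ a ∈ [1, r]` congruent to `x a * n` modulo `r` for `a ≠ a₀` makes
`d * n - ∑_{a ≠ a₀} c a * ℓ a` a multiple `r * ℓ₀` of `r`, positive once `n` is large, with
`ℓ₀ ≥ (d * n - K) / r` for a constant `K`. Sending each `a ≠ a₀` to a fixed word of length `ℓ a`
and `a₀` to an arbitrary word of length `ℓ₀` yields `q ^ ℓ₀` distinct `V`-instances of length
`d * n`, because the image of `a₀` sits at a fixed position of the instance.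
-/

open Function

theorem Finset.natCast_gcd {ι : Type*} (s : Finset ι) (f : ι → ℕ) :
    ((s.gcd f : ℕ) : ℤ) = s.gcd fun i => (f i : ℤ) := by
  classical
  induction s using Finset.induction with
  | empty => simp
  | insert a s _ ih =>
    rw [Finset.gcd_insert, Finset.gcd_insert, ← ih, ← Int.coe_gcd, Int.gcd_natCast_natCast]
    rfl

theorem Int.exists_pos_le_dvd_sub (z : ℤ) {r : ℕ} (hr : 0 < r) :
    ∃ ℓ : ℕ, 0 < ℓ ∧ ℓ ≤ r ∧ (r : ℤ) ∣ z - ℓ := by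
  have h0 : 0 ≤ (z - 1) % r := Int.emod_nonneg _ (by omega)
  have h1 : (z - 1) % r < r := Int.emod_lt_of_pos _ (by omega)
  refine ⟨((z - 1) % r).toNat + 1, by omega, by omega, ?_⟩
  convert Int.dvd_self_sub_emod (x := z - 1) (m := r) using 1
  omega

theorem Finset.exists_pos_sum_mul_eq_of_gcd_dvd {ι : Type*} [DecidableEq ι] {s : Finset ι}
    {c : ι → ℕ} {a₀ : ι} (ha₀ : a₀ ∈ s) (hc : 0 < c a₀) {m : ℕ} (hm : s.gcd c ∣ m)
    (hlarge : c a₀ * ∑ a ∈ s.erase a₀, c a < m) :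
    ∃ f : ι → ℕ, (∀ a, 0 < f a) ∧ ∑ a ∈ s, c a * f a = m ∧
      m ≤ c a₀ * f a₀ + c a₀ * ∑ a ∈ s.erase a₀, c a := by
  obtain ⟨x, hx⟩ := Finset.gcd_eq_sum_mul s fun a => (c a : ℤ)
  obtain ⟨t, rfl⟩ := hm
  choose ℓ hℓ0 hℓr hℓdvd using fun a => Int.exists_pos_le_dvd_sub (x a * t) hc
  set S := ∑ a ∈ s.erase a₀, c a * ℓ a
  have hSle : S ≤ c a₀ * ∑ a ∈ s.erase a₀, c a := by
    rw [Finset.mul_sum]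
    exact Finset.sum_le_sum fun a _ => (Nat.mul_le_mul_left _ (hℓr a)).trans_eq (mul_comm _ _)
  -- `ℓ a ≡ x a * t (mod c a₀)`, so modulo `c a₀` the sum `S` agrees with `m = ∑ c a * x a * t`
  have hdvd : (c a₀ : ℤ) ∣ ((s.gcd c * t : ℕ) : ℤ) - S := by
    have : ((s.gcd c * t : ℕ) : ℤ) - S =
        c a₀ * (x a₀ * t) + ∑ a ∈ s.erase a₀, c a * (x a * t - ℓ a) := by
      rw [Nat.cast_mul, Finset.natCast_gcd, hx, Finset.sum_mul, ← Finset.add_sum_erase _ _ ha₀]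
      simp only [S, mul_sub, Finset.sum_sub_distrib, Nat.cast_sum, Nat.cast_mul]
      ring_nf
    rw [this]
    exact dvd_add (dvd_mul_right _ _) (Finset.dvd_sum fun a _ => (hℓdvd a).mul_left _)
  obtain ⟨ℓ₀, hℓ₀⟩ : c a₀ ∣ s.gcd c * t - S := by
    rwa [← Int.natCast_dvd_natCast, Nat.cast_sub (by omega)]
  have hsum : ∑ a ∈ s, c a * update ℓ a₀ ℓ₀ a = c a₀ * ℓ₀ + S := by
    rw [← Finset.add_sum_erase _ _ ha₀, update_self]
    congr 1
    exact Finset.sum_congr rfl fun a ha => by rw [update_of_ne (Finset.ne_of_mem_erase ha)]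
  refine ⟨update ℓ a₀ ℓ₀, fun a => ?_, by omega, by rw [update_self]; omega⟩
  rcases eq_or_ne a a₀ with rfl | ha
  · rw [update_self]
    exact Nat.pos_of_ne_zero (by rintro rfl; omega)
  · rw [update_of_ne ha]
    exact hℓ0 a

theorem List.flatten_map_update_injOn {α β : Type*} [DecidableEq α] {V : List α} {a : α}
    (ha : a ∈ V) (φ : α → List β) (k : ℕ) :
    Set.InjOn (fun u => (V.map (update φ a u)).flatten) {u | u.length = k} := by
  intro u₁ hu₁ u₂ hu₂ h
  obtain ⟨P, Q, rfl⟩ := List.append_of_mem ha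
  have hlen : ∀ u : List β, u.length = k →
      ((P.map (update φ a u)).flatten).length = (P.map (update (List.length ∘ φ) a k)).sum := by
    intro u hu
    rw [List.length_flatten, List.map_map, comp_update, hu]
  simp only [List.map_append, List.map_cons, List.flatten_append, List.flatten_cons,
    update_self] at h
  obtain ⟨-, h⟩ := List.append_inj h (by rw [hlen u₁ hu₁, hlen u₂ hu₂])
  exact (List.append_inj h (hu₁.trans hu₂.symm)).1

theorem natCard_le_natCard_ofFn {ι σ : Type*} [Finite σ] {P : List σ → Prop} {m : ℕ}
    (g : ι → List σ) (hg : Injective g) (hlen : ∀ i, (g i).length = m) (hP : ∀ i, P (g i)) :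
    Nat.card ι ≤ Nat.card {w : Fin m → σ // P (List.ofFn w)} := by
  have hofFn : ∀ l : List σ, (h : l.length = m) → List.ofFn (fun j : Fin m => l[j.1]) = l := by
    rintro l rfl
    exact List.ofFn_getElem
  refine Nat.card_le_card_of_injective
    (fun i => ⟨fun j => (g i)[j.1]'(hlen i ▸ j.2), by rw [hofFn _ (hlen i)]; exact hP i⟩)
    fun i j h => hg ?_
  rw [← hofFn _ (hlen i), ← hofFn _ (hlen j)]
  exact congrArg (List.ofFn ∘ Subtype.val) h

theorem pow_card_le_natCard_instances {α σ : Type*} [DecidableEq α] [Fintype σ] [Nonempty σ]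
    {V : List α} {a₀ : α} (ha₀ : a₀ ∈ V) {f : α → ℕ} (hf : ∀ a, 0 < f a) :
    Fintype.card σ ^ f a₀ ≤ Nat.card
      {w : Fin (∑ a ∈ V.toFinset, V.count a * f a) → σ // IsInstance V (List.ofFn w)} := by
  obtain ⟨s⟩ := ‹Nonempty σ›
  set φ : α → List σ := fun a => List.replicate (f a) s
  have hφ : ∀ u : Fin (f a₀) → σ, List.length ∘ update φ a₀ (List.ofFn u) = f := by
    intro u
    rw [comp_update, List.length_ofFn, show List.length ∘ φ = f from
      funext fun a => List.length_replicate, update_eq_self]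
  calc Fintype.card σ ^ f a₀ = Nat.card (Fin (f a₀) → σ) := by simp
    _ ≤ _ := natCard_le_natCard_ofFn
      (fun u => (V.map (update φ a₀ (List.ofFn u))).flatten) ?_ ?_ ?_
  · intro u v h
    exact List.ofFn_injective (List.flatten_map_update_injOn ha₀ φ (f a₀) (by simp) (by simp) h)
  · intro u
    rw [List.length_flatten, List.map_map, hφ, Finset.sum_list_map_count]
    simp only [smul_eq_mul]
  · intro u
    refine ⟨update φ a₀ (List.ofFn u), fun a => List.ne_nil_of_length_pos ?_, rfl⟩
    exact (congrFun (hφ u) a).trans_gt (hf a)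

theorem Real.rpow_neg_div_mul_rpow_div_le_pow {q : ℝ} (hq : 1 ≤ q) {r : ℕ} (hr : 0 < r)
    {m ℓ K : ℕ} (h : m ≤ r * ℓ + K) :
    q ^ (-(K : ℝ) / r) * q ^ ((m : ℝ) / r) ≤ q ^ ℓ := by
  rw [← Real.rpow_add (by linarith), ← Real.rpow_natCast]
  apply Real.rpow_le_rpow_of_exponent_le hq
  rw [← add_div, div_le_iff₀ (by positivity)]
  have : (m : ℝ) ≤ r * ℓ + K := by exact_mod_cast h
  linarith

theorem stmt7_general {α σ : Type*} [DecidableEq α] [Fintype σ] (V : List α)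
    (hq : 2 ≤ Fintype.card σ) (r d : ℕ)
    (hr : (∀ a ∈ V, r ≤ V.count a) ∧ ∃ a ∈ V, V.count a = r)
    (hd : d = V.toFinset.gcd fun a => V.count a) :
    ∃ c : ℝ, 0 < c ∧ ∃ N : ℕ, ∀ n : ℕ, N < n →
      c * (Fintype.card σ : ℝ) ^ (((d : ℝ) * n) / r) ≤
        (Nat.card {w : Fin (d * n) → σ // IsInstance V (List.ofFn w)} : ℝ) := by
  obtain ⟨-, a₀, ha₀, rfl⟩ := hr
  have ha₀s : a₀ ∈ V.toFinset := List.mem_toFinset.mpr ha₀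
  have hr0 : 0 < V.count a₀ := List.count_pos_iff.mpr ha₀
  have hd0 : 0 < d := hd ▸ Nat.pos_of_dvd_of_pos (Finset.gcd_dvd ha₀s) hr0
  have : Nonempty σ := Fintype.card_pos_iff.mp (by omega)
  set K := V.count a₀ * ∑ a ∈ V.toFinset.erase a₀, V.count a
  refine ⟨(Fintype.card σ : ℝ) ^ (-(K : ℝ) / V.count a₀),
    Real.rpow_pos_of_pos (by exact_mod_cast Fintype.card_pos) _, K, fun n hn => ?_⟩
  obtain ⟨f, hf, hsum, hbound⟩ := Finset.exists_pos_sum_mul_eq_of_gcd_dvd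
    (c := fun a => V.count a) (m := d * n) ha₀s hr0 (by rw [← hd]; exact dvd_mul_right _ _)
    (hn.trans_le (Nat.le_mul_of_pos_left n hd0))
  have hcount := pow_card_le_natCard_instances (σ := σ) ha₀ hf
  rw [hsum] at hcount
  calc _ ≤ (Fintype.card σ : ℝ) ^ f a₀ := by
        have := Real.rpow_neg_div_mul_rpow_div_le_pow (q := Fintype.card σ)
          (by exact_mod_cast Fintype.card_pos) hr0 hbound
        rwa [Nat.cast_mul d n] at this
    _ ≤ _ := by exact_mod_cast hcount

/-- Let `V` have minimal letter-multiplicity `r` and gcd of multiplicities `d`,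
and let `|Σ| = q ≥ 2`. Then there are `c > 0` and `N` such that for all `n > N`,
the number of `V`-instances in `Σ^{dn}` is at least `c ⬝ q^{dn/r}`. -/
theorem stmt7 {α σ : Type*} [DecidableEq α] [Fintype σ] (V : List α) (hV : V ≠ [])
    (hq : 2 ≤ Fintype.card σ) (r d : ℕ)
    (hr : (∀ a ∈ V, r ≤ V.count a) ∧ ∃ a ∈ V, V.count a = r)
    (hd : d = V.toFinset.gcd fun a => V.count a) :
    ∃ c : ℝ, 0 < c ∧ ∃ N : ℕ, ∀ n : ℕ, N < n →
      c * (Fintype.card σ : ℝ) ^ (((d : ℝ) * n) / r) ≤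
        (Nat.card {w : Fin (d * n) → σ // IsInstance V (List.ofFn w)} : ℝ) :=
  stmt7_general V hq r d hr hd
end

section
/- Let V be a word with k distinct letters, each occurring at least r times in V for a positive integer r. Let Σ be a finite alphabet with q ≥ 2 letters and W_n ∈ Σ^n chosen uniformly at random. Then for any nondecreasing function f with f(n) > 0 and for sufficiently large n, P(C(n+1, 2) · δ(V,W_n) > n·f(n)) < n^{k+3} · q^{f(n)(1−r)/r}. -/
open Filter Asymptotics

/-!
If `C(n+1,2) δ(V,W) > n f(n)`, some factor `W[i,j]` of length `m ≥ f(n)` is a `V`-instance,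
because at most `n f(n)` pairs `(i,j)` have `j - i < f(n)`. An instance `φ(V)` of length `m`
is determined by the `k` lengths `|φ(a)| ≤ m` and by the word `φ(a₁)⋯φ(aₖ)` over the distinct
letters, whose length is at most `m / r` since every letter occurs `r` times. Hence a fixed
factor of length `m` is an instance with probability at most
`(m+1)^k q^(m/r - m) ≤ (n+1)^k q^(f(n)(1-r)/r)`, and a union bound over the at most `(n+1)^2`
pairs gives `(n+1)^(k+2) q^(f(n)(1-r)/r)`, which is less than `n^(k+3) q^(f(n)(1-r)/r)` once
`n > 2^(k+2)`.
-/

lemma subword_ofFn {σ : Type*} {n i j : ℕ} (w : Fin n → σ) (hij : i ≤ j) (hjn : j ≤ n) :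
    subword (List.ofFn w) i j = List.ofFn (fun t : Fin (j - i) => w ⟨i + t, by omega⟩) := by
  apply List.ext_getElem
  · simp only [subword, List.length_take, List.length_drop, List.length_ofFn, inf_eq_left]
    omega
  · intro t _ _
    simp [subword, List.getElem_take, List.getElem_drop, List.getElem_ofFn]

lemma card_subword_le {σ : Type*} [Fintype σ] (p : List σ → Prop) {n i j : ℕ}
    (hij : i ≤ j) (hjn : j ≤ n) :
    Nat.card {w : Fin n → σ // p (subword (List.ofFn w) i j)} ≤
      Nat.card {u : Fin (j - i) → σ // p (List.ofFn u)} * Fintype.card σ ^ (i + (n - j)) := by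
  let split : {w : Fin n → σ // p (subword (List.ofFn w) i j)} →
      {u : Fin (j - i) → σ // p (List.ofFn u)} × (Fin i → σ) × (Fin (n - j) → σ) :=
    fun w => (⟨fun t => w.1 ⟨i + t, by omega⟩, subword_ofFn w.1 hij hjn ▸ w.2⟩,
      fun t => w.1 ⟨t, by omega⟩, fun t => w.1 ⟨j + t, by omega⟩)
  have split_injective : Function.Injective split := by
    rintro w₁ w₂ h
    simp only [split, Prod.ext_iff, Subtype.ext_iff, funext_iff] at h
    obtain ⟨hmid, hleft, hright⟩ := h
    refine Subtype.ext (funext fun x => ?_)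
    rcases lt_or_ge x.1 i with hx | hx
    · exact hleft ⟨x, hx⟩
    rcases lt_or_ge x.1 j with hx' | hx'
    · simpa [Nat.add_sub_cancel' hx] using hmid ⟨x - i, by omega⟩
    · simpa [Nat.add_sub_cancel' hx'] using hright ⟨x - j, by omega⟩
  calc _ ≤ _ := Nat.card_le_card_of_injective split split_injective
    _ = _ := by
      simp [Nat.card_prod, Nat.card_eq_fintype_card, pow_add]

lemma eq_of_flatten_map_eq {α β : Type*} {φ₁ φ₂ : α → List β} :
    ∀ {L : List α}, (∀ a ∈ L, (φ₁ a).length = (φ₂ a).length) →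
      (L.map φ₁).flatten = (L.map φ₂).flatten → ∀ a ∈ L, φ₁ a = φ₂ a
  | [], _, _ => by simp
  | b :: L, hlen, h => by
    simp only [List.map_cons, List.flatten_cons] at h
    obtain ⟨hb, hL⟩ := List.append_inj h (hlen b List.mem_cons_self)
    simpa [hb] using eq_of_flatten_map_eq (fun a ha => hlen a (List.mem_cons_of_mem b ha)) hL

lemma flatten_map_eq_of_flatten_map_dedup_eq {α β : Type*} [DecidableEq α] {V : List α}
    {φ₁ φ₂ : α → List β} (hlen : ∀ a ∈ V, (φ₁ a).length = (φ₂ a).length)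
    (h : (V.dedup.map φ₁).flatten = (V.dedup.map φ₂).flatten) :
    (V.map φ₁).flatten = (V.map φ₂).flatten := by
  have hφ := eq_of_flatten_map_eq (fun a ha => hlen a (List.mem_dedup.1 ha)) h
  exact congrArg List.flatten (List.map_congr_left fun a ha => hφ a (List.mem_dedup.2 ha))

lemma length_flatten_map_dedup {α β : Type*} [DecidableEq α] (V : List α) (φ : α → List β) :
    (V.dedup.map φ).flatten.length = ∑ a ∈ V.toFinset, (φ a).length := by
  rw [List.length_flatten, List.map_map, ← List.sum_toFinset _ V.nodup_dedup]
  exact Finset.sum_congr (by ext; simp) fun _ _ => rfl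

lemma mul_length_flatten_map_dedup_le {α β : Type*} [DecidableEq α] {V : List α} {r : ℕ}
    (hr : ∀ a ∈ V, r ≤ V.count a) (φ : α → List β) :
    r * (V.dedup.map φ).flatten.length ≤ (V.map φ).flatten.length := by
  rw [length_flatten_map_dedup, Finset.mul_sum]
  calc ∑ a ∈ V.toFinset, r * (φ a).length
      ≤ ∑ a ∈ V.toFinset, V.count a * (φ a).length :=
        Finset.sum_le_sum fun a ha => Nat.mul_le_mul_right _ (hr a (List.mem_toFinset.1 ha))
    _ = (V.map φ).flatten.length := by
        simp [List.length_flatten, Finset.sum_list_map_count, Function.comp_def]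

lemma card_isInstance_le {α σ : Type*} [DecidableEq α] [Fintype σ] [Nonempty σ] {V : List α}
    {r : ℕ} (hrpos : 0 < r) (hr : ∀ a ∈ V, r ≤ V.count a) (m : ℕ) :
    Nat.card {u : Fin m → σ // IsInstance V (List.ofFn u)} ≤
      (m + 1) ^ V.toFinset.card * Fintype.card σ ^ (m / r) := by
  classical
  choose φ _ hφ using fun u : {u : Fin m → σ // IsInstance V (List.ofFn u)} => u.2
  have hlength : ∀ u, (V.map (φ u)).flatten.length = m := fun u => by
    rw [← hφ u, List.length_ofFn]
  have hlength_le : ∀ u, ∀ a ∈ V.toFinset, (φ u a).length ≤ m := fun u a ha => by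
    rw [← hlength u, List.length_flatten]
    exact List.le_sum_of_mem (List.mem_map_of_mem (List.mem_map_of_mem (List.mem_toFinset.1 ha)))
  have hdedup_le : ∀ u, (V.dedup.map (φ u)).flatten.length ≤ m / r := fun u =>
    (Nat.le_div_iff_mul_le hrpos).2 <| by
      rw [Nat.mul_comm, ← hlength u]; exact mul_length_flatten_map_dedup_le hr (φ u)
  -- `φ(a₁)⋯φ(aₖ)` has length at most `m / r`, so reading it through `getD` on `Fin (m / r)`
  -- loses nothing
  let encode (u : {u : Fin m → σ // IsInstance V (List.ofFn u)}) :
      ({a // a ∈ V.toFinset} → Fin (m + 1)) × (Fin (m / r) → σ) :=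
    (fun a => ⟨(φ u a).length, Nat.lt_succ_of_le (hlength_le u a a.2)⟩,
      fun t => (V.dedup.map (φ u)).flatten.getD t (Classical.arbitrary σ))
  have encode_injective : Function.Injective encode := by
    intro u₁ u₂ h
    obtain ⟨hlen, hword⟩ := Prod.ext_iff.1 h
    have hlen' : ∀ a ∈ V, (φ u₁ a).length = (φ u₂ a).length := fun a ha =>
      congrArg Fin.val (congrFun hlen ⟨a, List.mem_toFinset.2 ha⟩)
    have hdedup : (V.dedup.map (φ u₁)).flatten = (V.dedup.map (φ u₂)).flatten := by
      have hlen_dedup := (length_flatten_map_dedup V (φ u₁)).trans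
        ((Finset.sum_congr rfl fun a ha => hlen' a (List.mem_toFinset.1 ha)).trans
          (length_flatten_map_dedup V (φ u₂)).symm)
      refine List.ext_getElem hlen_dedup fun t ht₁ ht₂ => ?_
      have := congrFun hword ⟨t, ht₁.trans_le (hdedup_le u₁)⟩
      dsimp only [encode] at this
      rwa [List.getD_eq_getElem _ _ ht₁, List.getD_eq_getElem _ _ ht₂] at this
    exact Subtype.ext <| List.ofFn_injective <| by
      rw [hφ, hφ, flatten_map_eq_of_flatten_map_dedup_eq hlen' hdedup]
  calc _ ≤ _ := Nat.card_le_card_of_injective encode encode_injective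
    _ = _ := by
      rw [Nat.card_eq_fintype_card, Fintype.card_prod, Fintype.card_fun, Fintype.card_fun,
        Fintype.card_coe, Fintype.card_fin, Fintype.card_fin]

lemma natCast_div_add_sub_le {m n r : ℕ} {x : ℝ} (hr : 0 < r) (hmn : m ≤ n) (hxm : x ≤ m) :
    ((m / r + (n - m) : ℕ) : ℝ) ≤ x * (1 - r) / r + n := by
  have hr' : (0 : ℝ) < r := Nat.cast_pos.2 hr
  have hdiv : ((m / r : ℕ) : ℝ) ≤ m / r := Nat.cast_div_le (α := ℝ)
  have hscale : (m : ℝ) * (1 - r) / r ≤ x * (1 - r) / r :=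
    div_le_div_of_nonneg_right
      (mul_le_mul_of_nonpos_right hxm (by linarith [Nat.one_le_cast (α := ℝ) |>.2 hr])) hr'.le
  have hsplit : (m : ℝ) / r - m = m * (1 - r) / r := by field_simp
  push_cast [hmn]
  linarith

lemma card_isInstance_subword_le {α σ : Type*} [DecidableEq α] [Fintype σ] [Nonempty σ]
    {V : List α} {r : ℕ} (hrpos : 0 < r) (hr : ∀ a ∈ V, r ≤ V.count a) {n i j : ℕ} {x : ℝ}
    (hij : i ≤ j) (hjn : j ≤ n) (hx : x ≤ (j - i : ℕ)) :
    (Nat.card {w : Fin n → σ // IsInstance V (subword (List.ofFn w) i j)} : ℝ) ≤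
      ((n : ℝ) + 1) ^ V.toFinset.card * (Fintype.card σ : ℝ) ^ (x * (1 - r) / r + n) := by
  set m := j - i
  have hcount := (card_subword_le (IsInstance V) hij hjn).trans
    (Nat.mul_le_mul_right _ (card_isInstance_le (σ := σ) hrpos hr m))
  rw [show i + (n - j) = n - m by omega] at hcount
  have hq : (1 : ℝ) ≤ Fintype.card σ := Nat.one_le_cast.2 Fintype.card_pos
  calc _ ≤ (((m + 1) ^ V.toFinset.card * Fintype.card σ ^ (m / r) *
          Fintype.card σ ^ (n - m) : ℕ) : ℝ) := by exact_mod_cast hcount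
    _ = ((m : ℝ) + 1) ^ V.toFinset.card *
          (Fintype.card σ : ℝ) ^ ((m / r + (n - m) : ℕ) : ℝ) := by
      rw [Real.rpow_natCast]; push_cast [pow_add]; ring
    _ ≤ _ := by
      gcongr
      · omega
      · exact natCast_div_add_sub_le hrpos (by omega) hx

lemma card_short_pairs_le (n : ℕ) {x : ℝ} (hx : 0 ≤ x) :
    (((Finset.range (n + 1) ×ˢ Finset.range (n + 1)).filter
      (fun p => p.1 < p.2 ∧ ((p.2 - p.1 : ℕ) : ℝ) < x)).card : ℝ) ≤ n * x := by
  calc _ ≤ ((Finset.range n ×ˢ Finset.Icc 1 ⌊x⌋₊).card : ℝ) := by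
        refine Nat.cast_le.2 (Finset.card_le_card_of_injOn (fun p => (p.1, p.2 - p.1)) ?_ ?_)
        · intro p hp
          simp only [Finset.mem_coe, Finset.mem_filter, Finset.mem_product, Finset.mem_range] at hp
          simp only [Finset.mem_coe, Finset.mem_product, Finset.mem_range, Finset.mem_Icc]
          exact ⟨by omega, by omega, Nat.le_floor hp.2.2.le⟩
        · intro p hp p' hp' hpp'
          simp only [Finset.coe_filter, Set.mem_ofPred_eq, Prod.mk.injEq] at hp hp' hpp'
          exact Prod.ext hpp'.1 (by omega)
    _ ≤ n * x := by
        simp only [Finset.card_product, Finset.card_range, Nat.card_Icc, add_tsub_cancel_right,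
          Nat.cast_mul]
        gcongr
        exact Nat.floor_le hx

lemma exists_long_isInstance_subword {α β : Type*} (V : List α) (W : List β) {x : ℝ}
    (hx : 0 ≤ x) (h : W.length * x < (W.length + 1).choose 2 * density V W) :
    ∃ i j, i < j ∧ j ≤ W.length ∧ x ≤ ((j - i : ℕ) : ℝ) ∧ IsInstance V (subword W i j) := by
  classical
  have hchoose : ((W.length + 1).choose 2 : ℝ) ≠ 0 := by
    intro h0
    rw [h0, zero_mul] at h
    exact h.not_ge (by positivity)
  rw [density, mul_div_cancel₀ _ hchoose] at h
  by_contra! hshort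
  refine (h.trans_le (le_trans ?_ (card_short_pairs_le W.length hx))).false
  refine Nat.cast_le.2 (Finset.card_le_card fun p hp => ?_)
  simp only [Finset.mem_filter, Finset.mem_product, Finset.mem_range] at hp ⊢
  exact ⟨hp.1, hp.2.1, not_le.1 fun hxle => hshort _ _ hp.2.1 (by omega) hxle hp.2.2⟩

lemma card_density_gt_le {α σ : Type*} [DecidableEq α] [Fintype σ] [Nonempty σ] {V : List α}
    {r : ℕ} (hrpos : 0 < r) (hr : ∀ a ∈ V, r ≤ V.count a) (n : ℕ) {x : ℝ} (hx : 0 ≤ x) :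
    (Nat.card {w : Fin n → σ //
        (n : ℝ) * x < (Nat.choose (n + 1) 2 : ℝ) * density V (List.ofFn w)} : ℝ) ≤
      ((n : ℝ) + 1) ^ (V.toFinset.card + 2) * (Fintype.card σ : ℝ) ^ (x * (1 - r) / r + n) := by
  classical
  set bound := ((n : ℝ) + 1) ^ V.toFinset.card * (Fintype.card σ : ℝ) ^ (x * (1 - r) / r + n)
  let long := (Finset.range (n + 1) ×ˢ Finset.range (n + 1)).filter
    (fun p => p.1 < p.2 ∧ x ≤ ((p.2 - p.1 : ℕ) : ℝ))
  let hits (p : ℕ × ℕ) := Finset.univ.filter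
    (fun w : Fin n → σ => IsInstance V (subword (List.ofFn w) p.1 p.2))
  have hcover : Finset.univ.filter (fun w : Fin n → σ =>
      (n : ℝ) * x < (Nat.choose (n + 1) 2 : ℝ) * density V (List.ofFn w)) ⊆ long.biUnion hits := by
    intro w hw
    obtain ⟨i, j, hij, hjn, hxij, hinst⟩ := exists_long_isInstance_subword V (List.ofFn w) hx
      (by rw [List.length_ofFn]; exact (Finset.mem_filter.1 hw).2)
    rw [List.length_ofFn] at hjn
    simp only [Finset.mem_biUnion, Finset.mem_filter, Finset.mem_product, Finset.mem_range,
      Finset.mem_univ, true_and, long, hits]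
    exact ⟨(i, j), ⟨⟨by omega, by omega⟩, hij, hxij⟩, hinst⟩
  have hhits : ∀ p ∈ long, ((hits p).card : ℝ) ≤ bound := by
    intro p hp
    simp only [Finset.mem_filter, Finset.mem_product, Finset.mem_range, long] at hp
    rw [← Fintype.card_subtype, ← Nat.card_eq_fintype_card]
    exact card_isInstance_subword_le hrpos hr hp.2.1.le (by omega) hp.2.2
  have hlong : long.card ≤ (n + 1) ^ 2 :=
    (Finset.card_filter_le _ _).trans (by simp [sq])
  calc _ = ((Finset.univ.filter (fun w : Fin n → σ =>
        (n : ℝ) * x < (Nat.choose (n + 1) 2 : ℝ) * density V (List.ofFn w))).card : ℝ) := by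
        rw [Nat.card_eq_fintype_card, Fintype.card_subtype]
    _ ≤ ∑ p ∈ long, ((hits p).card : ℝ) := by
        exact_mod_cast (Finset.card_le_card hcover).trans Finset.card_biUnion_le
    _ ≤ long.card * bound := by
        simpa using Finset.sum_le_sum hhits
    _ ≤ ((n : ℝ) + 1) ^ 2 * bound := by gcongr; exact_mod_cast hlong
    _ = _ := by ring

lemma add_one_pow_lt_pow_succ {n k : ℕ} (hn : 2 ^ k < n) : (n + 1) ^ k < n ^ (k + 1) :=
  have hn₁ : 1 ≤ n := Nat.one_le_two_pow.trans hn.le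
  calc (n + 1) ^ k ≤ (2 * n) ^ k := Nat.pow_le_pow_left (by omega) k
    _ = 2 ^ k * n ^ k := Nat.mul_pow 2 n k
    _ < n * n ^ k := Nat.mul_lt_mul_of_pos_right hn (Nat.pow_pos hn₁)
    _ = n ^ (k + 1) := (Nat.pow_succ' ..).symm

theorem stmt15_general {α σ : Type*} [DecidableEq α] [Fintype σ] (V : List α) (k r : ℕ)
    (hrpos : 0 < r) (hk : k = V.toFinset.card) (hr : ∀ a ∈ V, r ≤ V.count a)
    (hq : 2 ≤ Fintype.card σ) (f : ℕ → ℝ) (hfpos : ∀ n, 0 < f n) :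
    ∃ N : ℕ, ∀ n : ℕ, N ≤ n →
      (Nat.card {w : Fin n → σ //
          (n : ℝ) * f n < (Nat.choose (n + 1) 2 : ℝ) * density V (List.ofFn w)} : ℝ) /
        (Fintype.card σ : ℝ) ^ n <
      (n : ℝ) ^ (k + 3) * (Fintype.card σ : ℝ) ^ (f n * (1 - (r : ℝ)) / r) := by
  have : Nonempty σ := Fintype.card_pos_iff.1 (by omega)
  have hq₀ : (0 : ℝ) < Fintype.card σ := Nat.cast_pos.2 Fintype.card_pos
  refine ⟨2 ^ (k + 2) + 1, fun n hn => ?_⟩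
  rw [div_lt_iff₀ (by positivity)]
  calc _ ≤ ((n : ℝ) + 1) ^ (k + 2) * (Fintype.card σ : ℝ) ^ (f n * (1 - r) / r + n) :=
        hk ▸ card_density_gt_le hrpos hr n (hfpos n).le
    _ = ((n : ℝ) + 1) ^ (k + 2) * (Fintype.card σ : ℝ) ^ (f n * (1 - r) / r) *
          (Fintype.card σ : ℝ) ^ n := by
        rw [Real.rpow_add hq₀, Real.rpow_natCast, mul_assoc]
    _ < _ := by
        gcongr
        exact_mod_cast add_one_pow_lt_pow_succ (by omega)

/-- Let `V` have `k` distinct letters, each occurring at least `r ≥ 1` times,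
and let `|Σ| = q ≥ 2`. Then for any nondecreasing positive `f` and sufficiently
large `n`, `P(C(n+1,2) δ(V,W_n) > n f(n)) < n^{k+3} q^{f(n)(1-r)/r}`. -/
theorem stmt15 {α σ : Type*} [DecidableEq α] [Fintype σ] (V : List α) (k r : ℕ)
    (hrpos : 0 < r) (hk : k = V.toFinset.card) (hr : ∀ a ∈ V, r ≤ V.count a)
    (hq : 2 ≤ Fintype.card σ) (f : ℕ → ℝ) (hf : Monotone f) (hfpos : ∀ n, 0 < f n) :
    ∃ N : ℕ, ∀ n : ℕ, N ≤ n →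
      (Nat.card {w : Fin n → σ //
          (n : ℝ) * f n < (Nat.choose (n + 1) 2 : ℝ) * density V (List.ofFn w)} : ℝ) /
        (Fintype.card σ : ℝ) ^ n <
      (n : ℝ) ^ (k + 3) * (Fintype.card σ : ℝ) ^ (f n * (1 - (r : ℝ)) / r) :=
  stmt15_general V k r hrpos hk hr hq f hfpos
end
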